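/- arXiv:2511.12292 — 4 statements merged into one kernel-verified Lean document; each statement's English description precedes it below -/
import Mathlib

section
/- Let l < u be real numbers, a, b ∈ ℝ, and let a_p = Proj_{[l,u]}(a), b_p = Proj_{[l,u]}(b) denote the projections onto the interval [l,u]. Then for any non-decreasing function φ : ℝ → ℝ, (a_p - b_p)(φ(a) - φ(b)) ≥ (a_p - b_p)(φ(a_p) - φ(b_p)). -/
/-! Write `p x = max l (min u x)`. Clamping moves a point only towards the interval, so `p a` lies
between `p b` and `a`; monotonicity of `φ` then gives `(p a - p b) * (φ a - φ (p a)) ≥ 0`.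
Adding this to the same fact with `a` and `b` swapped yields the inequality. -/

section LinearOrder

variable {α : Type*} [LinearOrder α] {l u a b : α}

theorem max_min_le_of_max_min_lt (h : max l (min u b) < max l (min u a)) :
    max l (min u a) ≤ a := by
  have hl : l < max l (min u a) := (le_max_left l (min u b)).trans_lt h
  rw [max_eq_right (lt_max_iff.mp hl |>.resolve_left (lt_irrefl l)).le]
  exact min_le_right u a

theorem le_max_min_of_max_min_lt (h : max l (min u a) < max l (min u b)) :
    a ≤ max l (min u a) := by
  have hau : a ≤ u := by
    by_contra! hua
    rw [min_eq_left hua.le] at h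
    exact h.not_ge (max_le_max_left l (min_le_left u b))
  rw [min_eq_right hau]
  exact le_max_right l a

end LinearOrder

theorem mul_sub_apply_nonneg_of_between {α : Type*} [Ring α] [LinearOrder α] [IsOrderedRing α]
    {φ : α → α} (hφ : Monotone φ) {x y c : α} (hlt : c < y → y ≤ x) (hgt : y < c → x ≤ y) :
    0 ≤ (y - c) * (φ x - φ y) := by
  rcases lt_trichotomy c y with hcy | rfl | hyc
  · exact mul_nonneg (sub_nonneg.mpr hcy.le) (sub_nonneg.mpr (hφ (hlt hcy)))
  · simp
  · exact mul_nonneg_of_nonpos_of_nonpos (sub_nonpos.mpr hyc.le) (sub_nonpos.mpr (hφ (hgt hyc)))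

theorem proj_interval_monotone_ineq_general
    (l u : ℝ) (a b : ℝ) (φ : ℝ → ℝ) (hφ : Monotone φ) :
    (max l (min u a) - max l (min u b)) * (φ (max l (min u a)) - φ (max l (min u b)))
      ≤ (max l (min u a) - max l (min u b)) * (φ a - φ b) := by
  have ha : 0 ≤ (max l (min u a) - max l (min u b)) * (φ a - φ (max l (min u a))) :=
    mul_sub_apply_nonneg_of_between hφ max_min_le_of_max_min_lt le_max_min_of_max_min_lt
  have hb : 0 ≤ (max l (min u b) - max l (min u a)) * (φ b - φ (max l (min u b))) :=
    mul_sub_apply_nonneg_of_between hφ max_min_le_of_max_min_lt le_max_min_of_max_min_lt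
  linear_combination ha + hb

/-- Projection onto a closed interval `[l,u]` and a non-decreasing function `φ`:
`(a_p - b_p) * (φ a - φ b) ≥ (a_p - b_p) * (φ a_p - φ b_p)` where
`a_p = Proj_{[l,u]} a = max l (min u a)` and similarly for `b_p`. -/
theorem proj_interval_monotone_ineq
    (l u : ℝ) (hlu : l < u) (a b : ℝ) (φ : ℝ → ℝ) (hφ : Monotone φ) :
    (max l (min u a) - max l (min u b)) * (φ (max l (min u a)) - φ (max l (min u b)))
      ≤ (max l (min u a) - max l (min u b)) * (φ a - φ b) :=
  proj_interval_monotone_ineq_general l u a b φ hφ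
end

section
/- Let π^h > 0, ω^h > 0, κ^h > d ≥ 0 for h ∈ [H] with Σ_h π^h ω^h = 1. If sup_h (π^h/ω^h) < inf_h (π^h/ω^h · κ^h/(κ^h − d)), then Σ_h π^h ω^h (κ^h−d)/κ^h + sqrt( (Σ_h (π^h)²)(Σ_h (ω^h(κ^h−d)/κ^h)²) ) < 2. -/
/-!
Choose `c` strictly between `sup_h π^h/ω^h` and `inf_h (π^h/ω^h)·κ^h/(κ^h−d)`, and put
`b^h = ω^h (κ^h−d)/κ^h`. Then `π^h < c ω^h` and `c b^h < π^h`. The first gives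
`A := Σ (π^h)² < c Σ π^h ω^h = c`, the second `B := Σ (b^h)² < A / c²`. By Cauchy–Schwarz the
left-hand side is at most `2 √(A B) < 2 A / c < 2`.
-/

open Finset

theorem exists_between_of_forall_lt {ι α : Type*} [Finite ι] [LinearOrder α] [DenselyOrdered α]
    [NoMaxOrder α] [NoMinOrder α] [Nonempty α] {f g : ι → α} (hfg : ∀ i j, f i < g j) :
    ∃ c, (∀ i, f i < c) ∧ ∀ j, c < g j := by
  cases nonempty_fintype ι
  simpa using Finset.exists_between' (univ.image f) (univ.image g) (by simpa using hfg)

section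

variable {ι : Type*} {s : Finset ι} {p w b : ι → ℝ} {c : ℝ}

theorem sum_sq_lt_of_lt_mul (hs : s.Nonempty) (hp : ∀ i ∈ s, 0 < p i)
    (hpw : ∀ i ∈ s, p i < c * w i) (hsum : ∑ i ∈ s, p i * w i = 1) :
    ∑ i ∈ s, p i ^ 2 < c :=
  calc ∑ i ∈ s, p i ^ 2 < ∑ i ∈ s, c * (p i * w i) :=
        sum_lt_sum_of_nonempty hs fun i hi => by
          nlinarith [mul_lt_mul_of_pos_left (hpw i hi) (hp i hi)]
    _ = c := by rw [← mul_sum, hsum, mul_one]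

theorem sum_sq_lt_sum_sq_div_sq (hs : s.Nonempty) (hc : 0 < c) (hb : ∀ i ∈ s, 0 ≤ b i)
    (hbp : ∀ i ∈ s, c * b i < p i) :
    ∑ i ∈ s, b i ^ 2 < (∑ i ∈ s, p i ^ 2) / c ^ 2 :=
  calc ∑ i ∈ s, b i ^ 2 < ∑ i ∈ s, (p i / c) ^ 2 :=
        sum_lt_sum_of_nonempty hs fun i hi =>
          pow_lt_pow_left₀ ((lt_div_iff₀' hc).2 (hbp i hi)) (hb i hi) two_ne_zero
    _ = (∑ i ∈ s, p i ^ 2) / c ^ 2 := by simp_rw [sum_div, div_pow]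

theorem sum_mul_add_sqrt_lt_two (hs : s.Nonempty) (hp : ∀ i ∈ s, 0 < p i)
    (hb : ∀ i ∈ s, 0 ≤ b i) (hpw : ∀ i ∈ s, p i < c * w i) (hbp : ∀ i ∈ s, c * b i < p i)
    (hsum : ∑ i ∈ s, p i * w i = 1) :
    ∑ i ∈ s, p i * b i + √((∑ i ∈ s, p i ^ 2) * ∑ i ∈ s, b i ^ 2) < 2 := by
  set A := ∑ i ∈ s, p i ^ 2
  have hA : 0 < A := sum_pos (fun i hi => pow_pos (hp i hi) 2) hs
  have hAc : A < c := sum_sq_lt_of_lt_mul hs hp hpw hsum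
  have hc : 0 < c := hA.trans hAc
  have hcauchy : ∑ i ∈ s, p i * b i ≤ √(A * ∑ i ∈ s, b i ^ 2) :=
    Real.le_sqrt_of_sq_le (sum_mul_sq_le_sq_mul_sq s p b)
  have hsqrt : √(A * ∑ i ∈ s, b i ^ 2) < 1 := by
    rw [Real.sqrt_lt' one_pos, one_pow]
    calc A * ∑ i ∈ s, b i ^ 2 < A * (A / c ^ 2) :=
          mul_lt_mul_of_pos_left (sum_sq_lt_sum_sq_div_sq hs hc hb hbp) hA
      _ = (A / c) ^ 2 := by ring
      _ < 1 := pow_lt_one₀ (by positivity) ((div_lt_one hc).2 hAc) two_ne_zero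
  linarith

end

/-- If `sup_h (π^h/ω^h) < inf_h ((π^h/ω^h)·κ^h/(κ^h − d))` (stated as a pairwise
inequality over the finitely many classes), then
`Σ_h π^h ω^h (κ^h−d)/κ^h + sqrt((Σ_h (π^h)²)(Σ_h (ω^h(κ^h−d)/κ^h)²)) < 2`. -/
theorem condition_four_implies_condition_three
    {H : ℕ} (p w κ : Fin H → ℝ) (d : ℝ)
    (hp : ∀ h, 0 < p h) (hw : ∀ h, 0 < w h)
    (hκ : ∀ h, d < κ h) (hd : 0 ≤ d)
    (hsum : ∑ h, p h * w h = 1)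
    (hcond : ∀ h k : Fin H, p h / w h < (p k / w k) * (κ k / (κ k - d))) :
    (∑ h, p h * w h * ((κ h - d) / κ h))
      + Real.sqrt ((∑ h, (p h)^2) * (∑ h, (w h * (κ h - d) / κ h)^2)) < 2 := by
  have hne : (univ : Finset (Fin H)).Nonempty := nonempty_of_sum_ne_zero (hsum ▸ one_ne_zero)
  obtain ⟨c, hpc, hcκ⟩ := exists_between_of_forall_lt hcond
  have hκd : ∀ h, 0 < κ h - d := fun h => sub_pos.2 (hκ h)
  have hb : ∀ h, 0 < w h * (κ h - d) / κ h := fun h =>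
    div_pos (mul_pos (hw h) (hκd h)) (hd.trans_lt (hκ h))
  have hbp : ∀ h, c * (w h * (κ h - d) / κ h) < p h := fun h => by
    have hc := hcκ h
    rw [show p h / w h * (κ h / (κ h - d)) = p h / (w h * (κ h - d) / κ h) by
      field_simp [(hw h).ne', (hκd h).ne']] at hc
    exact (lt_div_iff₀ (hb h)).1 hc
  convert sum_mul_add_sqrt_lt_two hne (fun h _ => hp h) (fun h _ => (hb h).le)
    (fun h _ => (div_lt_iff₀ (hw h)).1 (hpc h)) (fun h _ => hbp h) hsum using 3 with h
  ring
end

section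
/- Let Q, S, M be H×H real matrices with Q diagonal positive definite, λ_min((I − Mᵀ)Q(I − S)) > 0, and λ_min(Q − (QS + MᵀQ(I−S))) > 0 guaranteed by these conditions. Then for any square-integrable ℝ^H-valued random vectors X¹, X² with Z̃ := E[X¹ − X²] and X̃ := X¹ − X², E[⟨X̃ − M Z̃, −Q(X̃ − S Z̃)⟩] ≤ −min{λ_min(Q), λ_min((I − Mᵀ)Q(I − S))} · E[|X̃|²]. -/
/-!
Write `X = Y + Z` with `Z = E X`, so that `Y` is centred. In `⟨X − MZ, Q(X − SZ)⟩` the cross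
terms are linear in `Y` and vanish in expectation, leaving
`E⟨X − MZ, Q(X − SZ)⟩ = E⟨Y, QY⟩ + ⟨Z, (I − Mᵀ)Q(I − S)Z⟩`. Each of the two quadratic forms is
bounded below by its `λ_min` times the squared norm, and `E|X|² = E|Y|² + |Z|²`.
-/

open Matrix MeasureTheory

/-- The smallest eigenvalue of the symmetrization `(A + Aᵀ)/2` of a real matrix `A`,
expressed via the Rayleigh quotient (infimum of `xᵀ A x` over Euclidean unit vectors). -/
noncomputable def lambdaMin {d : ℕ} (A : Matrix (Fin d) (Fin d) ℝ) : ℝ :=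
  sInf {r : ℝ | ∃ x : Fin d → ℝ, x ⬝ᵥ x = 1 ∧ r = x ⬝ᵥ (A *ᵥ x)}

section lambdaMin

variable {d : ℕ}

theorem bddBelow_rayleigh (A : Matrix (Fin d) (Fin d) ℝ) :
    BddBelow {r : ℝ | ∃ x : Fin d → ℝ, x ⬝ᵥ x = 1 ∧ r = x ⬝ᵥ (A *ᵥ x)} := by
  have hcont : Continuous fun v : EuclideanSpace ℝ (Fin d) => v.ofLp ⬝ᵥ (A *ᵥ v.ofLp) := by
    fun_prop
  refine ((isCompact_sphere (0 : EuclideanSpace ℝ (Fin d)) 1).bddBelow_image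
    hcont.continuousOn).mono ?_
  rintro r ⟨x, hx, rfl⟩
  refine ⟨WithLp.toLp 2 x, ?_, rfl⟩
  rw [mem_sphere_zero_iff_norm, ← pow_eq_one_iff_of_nonneg (norm_nonneg _) two_ne_zero,
    ← real_inner_self_eq_norm_sq, EuclideanSpace.inner_eq_star_dotProduct]
  simpa using hx

theorem lambdaMin_mul_dotProduct_self_le (A : Matrix (Fin d) (Fin d) ℝ) (v : Fin d → ℝ) :
    lambdaMin A * (v ⬝ᵥ v) ≤ v ⬝ᵥ (A *ᵥ v) := by
  rcases eq_or_ne v 0 with rfl | hv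
  · simp
  have hc : 0 < v ⬝ᵥ v := by simpa using dotProduct_self_star_pos_iff.2 hv
  have hs : (√(v ⬝ᵥ v))⁻¹ * (√(v ⬝ᵥ v))⁻¹ = (v ⬝ᵥ v)⁻¹ := by
    rw [← mul_inv, Real.mul_self_sqrt hc.le]
  set u := (√(v ⬝ᵥ v))⁻¹ • v
  have hu : u ⬝ᵥ u = 1 := by
    simp only [u, smul_dotProduct, dotProduct_smul, smul_eq_mul, ← mul_assoc, hs]
    exact inv_mul_cancel₀ hc.ne'
  have hAu : u ⬝ᵥ (A *ᵥ u) = v ⬝ᵥ (A *ᵥ v) / (v ⬝ᵥ v) := by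
    simp only [u, mulVec_smul, smul_dotProduct, dotProduct_smul, smul_eq_mul, ← mul_assoc, hs]
    ring
  rw [← le_div_iff₀ hc, ← hAu]
  exact csInf_le (bddBelow_rayleigh A) ⟨u, hu, rfl⟩

end lambdaMin

section dotProduct

variable {ι : Type*} [Fintype ι]

theorem add_dotProduct_mulVec_add (A : Matrix ι ι ℝ) (y u v : ι → ℝ) :
    (y + u) ⬝ᵥ (A *ᵥ (y + v))
      = y ⬝ᵥ (A *ᵥ y) + y ⬝ᵥ (A *ᵥ v + Aᵀ *ᵥ u) + u ⬝ᵥ (A *ᵥ v) := by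
  simp only [mulVec_add, add_dotProduct, dotProduct_add, dotProduct_mulVec y Aᵀ u,
    vecMul_transpose, dotProduct_comm (A *ᵥ y) u]
  ring

theorem sub_dotProduct_mulVec_sub_eq_recenter (A : Matrix ι ι ℝ) (x z a b : ι → ℝ) :
    (x - a) ⬝ᵥ (A *ᵥ (x - b))
      = (x - z) ⬝ᵥ (A *ᵥ (x - z)) + (x - z) ⬝ᵥ (A *ᵥ (z - b) + Aᵀ *ᵥ (z - a))
        + (z - a) ⬝ᵥ (A *ᵥ (z - b)) := by
  rw [← add_dotProduct_mulVec_add, sub_add_sub_cancel, sub_add_sub_cancel]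

theorem sub_mulVec_dotProduct_mulVec_sub [DecidableEq ι] (M Q S : Matrix ι ι ℝ) (z : ι → ℝ) :
    (z - M *ᵥ z) ⬝ᵥ (Q *ᵥ (z - S *ᵥ z)) = z ⬝ᵥ (((1 - Mᵀ) * Q * (1 - S)) *ᵥ z) := by
  have htrans : (1 - Mᵀ : Matrix ι ι ℝ) = (1 - M)ᵀ := by rw [transpose_sub, transpose_one]
  rw [htrans, ← mulVec_mulVec, ← mulVec_mulVec, mulVec_transpose, dotProduct_comm z,
    ← dotProduct_mulVec, dotProduct_comm (Q *ᵥ _), sub_mulVec, sub_mulVec, one_mulVec]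

end dotProduct

namespace MeasureTheory

variable {ι Ω : Type*} [Fintype ι] [MeasurableSpace Ω] {μ : Measure Ω}

theorem integral_dotProduct_const {Y : Ω → ι → ℝ} (hY : Integrable Y μ) (w : ι → ℝ) :
    ∫ ω, Y ω ⬝ᵥ w ∂μ = (∫ ω, Y ω ∂μ) ⬝ᵥ w :=
  ((dotProductBilin ℝ ℝ).flip w).toContinuousLinearMap.integral_comp_comm hY

theorem Integrable.dotProduct_const {Y : Ω → ι → ℝ} (hY : Integrable Y μ) (w : ι → ℝ) :
    Integrable (fun ω => Y ω ⬝ᵥ w) μ :=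
  ((dotProductBilin ℝ ℝ).flip w).toContinuousLinearMap.integrable_comp hY

variable [IsProbabilityMeasure μ] {X : Ω → ι → ℝ}

theorem integral_sub_integral (hX : Integrable X μ) :
    ∫ ω, (X ω - ∫ ω', X ω' ∂μ) ∂μ = 0 := by
  simp [integral_sub hX (integrable_const _)]

theorem Integrable.dotProduct_mulVec_sub_integral (hX : Integrable X μ) (A : Matrix ι ι ℝ)
    {a b : ι → ℝ} (hq : Integrable (fun ω => (X ω - a) ⬝ᵥ (A *ᵥ (X ω - b))) μ) :
    Integrable (fun ω => (X ω - ∫ ω', X ω' ∂μ) ⬝ᵥ (A *ᵥ (X ω - ∫ ω', X ω' ∂μ))) μ := by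
  set Z := ∫ ω', X ω' ∂μ
  have hY : Integrable (fun ω => X ω - Z) μ := hX.sub (integrable_const Z)
  have hcross := hY.dotProduct_const (A *ᵥ (Z - b) + Aᵀ *ᵥ (Z - a))
  refine ((hq.sub hcross).sub (integrable_const ((Z - a) ⬝ᵥ (A *ᵥ (Z - b))))).congr
    (ae_of_all _ fun ω => ?_)
  simp only [Pi.sub_apply, sub_dotProduct_mulVec_sub_eq_recenter A (X ω) Z a b]
  ring

theorem integral_dotProduct_mulVec_sub_eq_centered_add (hX : Integrable X μ) (A : Matrix ι ι ℝ)
    {a b : ι → ℝ} (hq : Integrable (fun ω => (X ω - a) ⬝ᵥ (A *ᵥ (X ω - b))) μ) :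
    ∫ ω, (X ω - a) ⬝ᵥ (A *ᵥ (X ω - b)) ∂μ
      = ∫ ω, (X ω - ∫ ω', X ω' ∂μ) ⬝ᵥ (A *ᵥ (X ω - ∫ ω', X ω' ∂μ)) ∂μ
        + ((∫ ω', X ω' ∂μ) - a) ⬝ᵥ (A *ᵥ ((∫ ω', X ω' ∂μ) - b)) := by
  set Z := ∫ ω', X ω' ∂μ
  have hY : Integrable (fun ω => X ω - Z) μ := hX.sub (integrable_const Z)
  have hcross := hY.dotProduct_const (A *ᵥ (Z - b) + Aᵀ *ᵥ (Z - a))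
  simp only [sub_dotProduct_mulVec_sub_eq_recenter A (X _) Z a b]
  have hcentred : Integrable (fun ω => (X ω - Z) ⬝ᵥ (A *ᵥ (X ω - Z))) μ :=
    hX.dotProduct_mulVec_sub_integral A hq
  have hmean : ∫ ω, (X ω - Z) ∂μ = 0 := integral_sub_integral hX
  rw [integral_add (hcentred.fun_add hcross) (integrable_const _), integral_add hcentred hcross,
    integral_dotProduct_const hY, hmean, zero_dotProduct, add_zero, integral_const, probReal_univ,
    one_smul]

end MeasureTheory

theorem lambdaMin_mul_integral_le {d : ℕ} {Ω : Type*} [MeasurableSpace Ω] {μ : Measure Ω}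
    (A : Matrix (Fin d) (Fin d) ℝ) {Y : Ω → Fin d → ℝ}
    (hYY : Integrable (fun ω => Y ω ⬝ᵥ Y ω) μ) (hYAY : Integrable (fun ω => Y ω ⬝ᵥ (A *ᵥ Y ω)) μ) :
    lambdaMin A * ∫ ω, Y ω ⬝ᵥ Y ω ∂μ ≤ ∫ ω, Y ω ⬝ᵥ (A *ᵥ Y ω) ∂μ := by
  rw [← integral_const_mul]
  exact integral_mono (hYY.const_mul _) hYAY fun ω => lambdaMin_mul_dotProduct_self_le A (Y ω)

theorem min_mul_add_le {a b s t : ℝ} (hs : 0 ≤ s) (ht : 0 ≤ t) :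
    min a b * (s + t) ≤ a * s + b * t := by
  rw [mul_add]
  exact add_le_add (mul_le_mul_of_nonneg_right (min_le_left a b) hs)
    (mul_le_mul_of_nonneg_right (min_le_right a b) ht)

theorem min_lambdaMin_mul_integral_le {d : ℕ} {Ω : Type*} [MeasurableSpace Ω] {μ : Measure Ω}
    [IsProbabilityMeasure μ] (Q S M : Matrix (Fin d) (Fin d) ℝ) {X : Ω → Fin d → ℝ}
    (hX : Integrable X μ) (hXX : Integrable (fun ω => X ω ⬝ᵥ X ω) μ)
    (hQ : Integrable (fun ω =>
      (X ω - M *ᵥ ∫ ω', X ω' ∂μ) ⬝ᵥ (Q *ᵥ (X ω - S *ᵥ ∫ ω', X ω' ∂μ))) μ) :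
    min (lambdaMin Q) (lambdaMin ((1 - Mᵀ) * Q * (1 - S))) * ∫ ω, X ω ⬝ᵥ X ω ∂μ
      ≤ ∫ ω, (X ω - M *ᵥ ∫ ω', X ω' ∂μ) ⬝ᵥ (Q *ᵥ (X ω - S *ᵥ ∫ ω', X ω' ∂μ)) ∂μ := by
  set Z := ∫ ω', X ω' ∂μ
  have hXX' : Integrable (fun ω => (X ω - 0) ⬝ᵥ ((1 : Matrix _ _ ℝ) *ᵥ (X ω - 0))) μ := by
    simpa only [sub_zero, one_mulVec] using hXX
  have hvar : ∫ ω, X ω ⬝ᵥ X ω ∂μ = ∫ ω, (X ω - Z) ⬝ᵥ (X ω - Z) ∂μ + Z ⬝ᵥ Z := by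
    simpa only [sub_zero, one_mulVec] using
      integral_dotProduct_mulVec_sub_eq_centered_add hX 1 hXX'
  have hYY : Integrable (fun ω => (X ω - Z) ⬝ᵥ (X ω - Z)) μ := by
    simpa only [one_mulVec] using hX.dotProduct_mulVec_sub_integral 1 hXX'
  have hZZ : 0 ≤ Z ⬝ᵥ Z := by simpa using dotProduct_star_self_nonneg Z
  have hYY0 : 0 ≤ ∫ ω, (X ω - Z) ⬝ᵥ (X ω - Z) ∂μ :=
    integral_nonneg fun ω => by simpa using dotProduct_star_self_nonneg (X ω - Z)
  calc _ ≤ lambdaMin Q * ∫ ω, (X ω - Z) ⬝ᵥ (X ω - Z) ∂μ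
          + lambdaMin ((1 - Mᵀ) * Q * (1 - S)) * (Z ⬝ᵥ Z) := by
          rw [hvar]
          exact min_mul_add_le hYY0 hZZ
    _ ≤ ∫ ω, (X ω - Z) ⬝ᵥ (Q *ᵥ (X ω - Z)) ∂μ + Z ⬝ᵥ (((1 - Mᵀ) * Q * (1 - S)) *ᵥ Z) :=
          add_le_add (lambdaMin_mul_integral_le Q hYY (hX.dotProduct_mulVec_sub_integral Q hQ))
            (lambdaMin_mul_dotProduct_self_le _ Z)
    _ = _ := by
          rw [integral_dotProduct_mulVec_sub_eq_centered_add hX Q hQ,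
            sub_mulVec_dotProduct_mulVec_sub]

theorem quadratic_reward_monotonicity_general
    {H : ℕ} {Ω : Type} [MeasurableSpace Ω] (μ : Measure Ω) [IsProbabilityMeasure μ]
    (Q S M : Matrix (Fin H) (Fin H) ℝ)
    (X₁ X₂ : Ω → (Fin H → ℝ))
    (hint : Integrable (fun ω => X₁ ω - X₂ ω) μ)
    (hsq : Integrable (fun ω => (X₁ ω - X₂ ω) ⬝ᵥ (X₁ ω - X₂ ω)) μ)
    (hprod : Integrable (fun ω =>
      (X₁ ω - X₂ ω - M *ᵥ (∫ ω', (X₁ ω' - X₂ ω') ∂μ)) ⬝ᵥ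
        (-(Q *ᵥ (X₁ ω - X₂ ω - S *ᵥ (∫ ω', (X₁ ω' - X₂ ω') ∂μ))))) μ) :
    ∫ ω, (X₁ ω - X₂ ω - M *ᵥ (∫ ω', (X₁ ω' - X₂ ω') ∂μ)) ⬝ᵥ
        (-(Q *ᵥ (X₁ ω - X₂ ω - S *ᵥ (∫ ω', (X₁ ω' - X₂ ω') ∂μ)))) ∂μ
      ≤ -(min (lambdaMin Q) (lambdaMin ((1 - Mᵀ) * Q * (1 - S)))) *
          ∫ ω, (X₁ ω - X₂ ω) ⬝ᵥ (X₁ ω - X₂ ω) ∂μ := by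
  simp only [dotProduct_neg, integral_neg, neg_mul, neg_le_neg_iff] at hprod ⊢
  exact min_lambdaMin_mul_integral_le Q S M hint hsq (integrable_neg_iff.1 hprod)

/-- Monotonicity estimate for quadratic rewards: for `Q` diagonal positive definite
and `λ_min((I − Mᵀ)Q(I − S)) > 0`, and square-integrable random vectors `X¹, X²`
with `X̃ = X¹ − X²`, `Z̃ = E[X̃]`,
`E[⟨X̃ − M Z̃, −Q(X̃ − S Z̃)⟩] ≤ −min{λ_min Q, λ_min((I − Mᵀ)Q(I − S))} · E[|X̃|²]`. -/
theorem quadratic_reward_monotonicity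
    {H : ℕ} {Ω : Type} [MeasurableSpace Ω] (μ : Measure Ω) [IsProbabilityMeasure μ]
    (Q S M : Matrix (Fin H) (Fin H) ℝ)
    (q : Fin H → ℝ) (hQdiag : Q = Matrix.diagonal q) (hQpos : Q.PosDef)
    (hM : 0 < lambdaMin ((1 - Mᵀ) * Q * (1 - S)))
    (X₁ X₂ : Ω → (Fin H → ℝ))
    (hint : Integrable (fun ω => X₁ ω - X₂ ω) μ)
    (hsq : Integrable (fun ω => (X₁ ω - X₂ ω) ⬝ᵥ (X₁ ω - X₂ ω)) μ)
    (hprod : Integrable (fun ω =>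
      (X₁ ω - X₂ ω - M *ᵥ (∫ ω', (X₁ ω' - X₂ ω') ∂μ)) ⬝ᵥ
        (-(Q *ᵥ (X₁ ω - X₂ ω - S *ᵥ (∫ ω', (X₁ ω' - X₂ ω') ∂μ))))) μ) :
    ∫ ω, (X₁ ω - X₂ ω - M *ᵥ (∫ ω', (X₁ ω' - X₂ ω') ∂μ)) ⬝ᵥ
        (-(Q *ᵥ (X₁ ω - X₂ ω - S *ᵥ (∫ ω', (X₁ ω' - X₂ ω') ∂μ)))) ∂μ
      ≤ -(min (lambdaMin Q) (lambdaMin ((1 - Mᵀ) * Q * (1 - S)))) *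
          ∫ ω, (X₁ ω - X₂ ω) ⬝ᵥ (X₁ ω - X₂ ω) ∂μ :=
  quadratic_reward_monotonicity_general μ Q S M X₁ X₂ hint hsq hprod
end

section
/- Let α^X > 0, L^X ≥ 0, and M be an H×H matrix with α^X − 2L^X‖M‖₂ > 0. Suppose F : ℝ^H × ℝ^H → ℝ^H satisfies: E[⟨x¹ − x², F(x¹, z¹) − F(x², z²)⟩] ≤ −α^X E[|x¹−x²|²] for z^i = E[x^i], and |F(x, z₁) − F(x, z₂)| ≤ L^X(|x₁−x₂| + |z₁−z₂|) componentwise Lipschitz. Then E[⟨x¹ − x² − M·E[x¹−x²], F(x¹,E[x¹]) − F(x²,E[x²])⟩] ≤ −(α^X − 2L^X‖M‖₂)·E[|x¹ − x²|²]. -/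
open Matrix MeasureTheory

/-- The largest eigenvalue of the symmetrization `(A + Aᵀ)/2` of a real matrix `A`,
expressed via the Rayleigh quotient (supremum of `xᵀ A x` over Euclidean unit vectors). -/
noncomputable def lambdaMax {d : ℕ} (A : Matrix (Fin d) (Fin d) ℝ) : ℝ :=
  sSup {r : ℝ | ∃ x : Fin d → ℝ, x ⬝ᵥ x = 1 ∧ r = x ⬝ᵥ (A *ᵥ x)}

/-- The spectral norm `‖M‖₂ = sqrt(λ_max(Mᵀ M))` of a real matrix. -/
noncomputable def specNorm {d : ℕ} (M : Matrix (Fin d) (Fin d) ℝ) : ℝ :=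
  Real.sqrt (lambdaMax (Mᵀ * M))

/-- The Euclidean norm of a vector in `ℝ^d`. -/
noncomputable def enorm' {d : ℕ} (x : Fin d → ℝ) : ℝ := Real.sqrt (x ⬝ᵥ x)

/-!
Write `D = x¹ − x²`, `ΔF = F(x¹, E x¹) − F(x², E x²)` and `m = E D = E x¹ − E x²`. The left side
splits as `E⟨D, ΔF⟩ − ⟨M m, E ΔF⟩`; monotonicity bounds the first term by `−α E|D|²`. For the
cross term, Cauchy–Schwarz, `|M m| ≤ ‖M‖₂ |m|` and the Lipschitz bound `|ΔF| ≤ L (|D| + |m|)` give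
`|⟨M m, ΔF⟩| ≤ ‖M‖₂ L |m| (|D| + |m|)` pointwise; taking expectations and using
`|m| ≤ E|D| ≤ (E|D|²)^{1/2}` (Jensen twice) bounds it by `2 L ‖M‖₂ E|D|²`.
-/

lemma sq_integral_le_integral_sq {Ω : Type*} [MeasurableSpace Ω] {μ : Measure Ω}
    [IsProbabilityMeasure μ] {f : Ω → ℝ} (hf : MemLp f 2 μ) :
    (∫ ω, f ω ∂μ) ^ 2 ≤ ∫ ω, f ω ^ 2 ∂μ := by
  have h := ProbabilityTheory.variance_eq_sub hf ▸ ProbabilityTheory.variance_nonneg f μ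
  simpa only [Pi.pow_apply, sub_nonneg] using h

section

variable {d : ℕ}

lemma enorm'_eq_norm_toLp (v : Fin d → ℝ) : enorm' v = ‖WithLp.toLp 2 v‖ := by
  rw [enorm', norm_eq_sqrt_real_inner, EuclideanSpace.inner_toLp_toLp, star_trivial]

lemma enorm'_nonneg (v : Fin d → ℝ) : 0 ≤ enorm' v := Real.sqrt_nonneg _

lemma dotProduct_self_eq_enorm'_sq (v : Fin d → ℝ) : v ⬝ᵥ v = enorm' v ^ 2 := by
  rw [enorm'_eq_norm_toLp, ← real_inner_self_eq_norm_sq, EuclideanSpace.inner_toLp_toLp,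
    star_trivial]

lemma dotProduct_self_nonneg (v : Fin d → ℝ) : 0 ≤ v ⬝ᵥ v := by
  rw [dotProduct_self_eq_enorm'_sq]
  positivity

lemma abs_dotProduct_le (v w : Fin d → ℝ) : |v ⬝ᵥ w| ≤ enorm' v * enorm' w := by
  simpa only [enorm'_eq_norm_toLp, EuclideanSpace.inner_toLp_toLp, star_trivial,
    dotProduct_comm w] using abs_real_inner_le_norm (WithLp.toLp 2 v) (WithLp.toLp 2 w)

lemma enorm'_integral_le {Ω : Type*} [MeasurableSpace Ω] (μ : Measure Ω) (D : Ω → Fin d → ℝ) :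
    enorm' (∫ ω, D ω ∂μ) ≤ ∫ ω, enorm' (D ω) ∂μ := by
  simp only [enorm'_eq_norm_toLp]
  calc ‖WithLp.toLp 2 (∫ ω, D ω ∂μ)‖
      = ‖∫ ω, (EuclideanSpace.equiv (Fin d) ℝ).symm (D ω) ∂μ‖ := by
        rw [ContinuousLinearEquiv.integral_comp_comm]; rfl
    _ ≤ ∫ ω, ‖WithLp.toLp 2 (D ω)‖ ∂μ := norm_integral_le_integral_norm _

lemma bddAbove_rayleigh (A : Matrix (Fin d) (Fin d) ℝ) :
    BddAbove {r : ℝ | ∃ x : Fin d → ℝ, x ⬝ᵥ x = 1 ∧ r = x ⬝ᵥ (A *ᵥ x)} := by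
  refine ⟨‖Matrix.toEuclideanCLM (𝕜 := ℝ) A‖, ?_⟩
  rintro _ ⟨x, hx, rfl⟩
  have hx1 : enorm' x = 1 := by rw [enorm', hx, Real.sqrt_one]
  calc x ⬝ᵥ (A *ᵥ x) ≤ enorm' x * enorm' (A *ᵥ x) :=
        (le_abs_self _).trans (abs_dotProduct_le _ _)
    _ = ‖Matrix.toEuclideanCLM (𝕜 := ℝ) A (WithLp.toLp 2 x)‖ := by
        rw [hx1, one_mul, enorm'_eq_norm_toLp, Matrix.toEuclideanCLM_toLp]
    _ ≤ ‖Matrix.toEuclideanCLM (𝕜 := ℝ) A‖ * ‖WithLp.toLp 2 x‖ :=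
        (Matrix.toEuclideanCLM (𝕜 := ℝ) A).le_opNorm _
    _ = ‖Matrix.toEuclideanCLM (𝕜 := ℝ) A‖ := by rw [← enorm'_eq_norm_toLp, hx1, mul_one]

lemma dotProduct_mulVec_le_lambdaMax_mul (A : Matrix (Fin d) (Fin d) ℝ) (v : Fin d → ℝ) :
    v ⬝ᵥ (A *ᵥ v) ≤ lambdaMax A * (v ⬝ᵥ v) := by
  by_cases hv : v = 0
  · simp [hv]
  have hc : enorm' v ≠ 0 := by
    rw [enorm', Real.sqrt_ne_zero (dotProduct_self_nonneg v)]
    exact mt dotProduct_self_eq_zero.mp hv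
  set x := (enorm' v)⁻¹ • v
  have hx : x ⬝ᵥ x = 1 := by
    simp only [x, smul_dotProduct, dotProduct_smul, dotProduct_self_eq_enorm'_sq, smul_eq_mul]
    field_simp
  calc v ⬝ᵥ (A *ᵥ v) = enorm' v ^ 2 * (x ⬝ᵥ (A *ᵥ x)) := by
        simp only [x, mulVec_smul, smul_dotProduct, dotProduct_smul, smul_eq_mul]
        field_simp
    _ ≤ enorm' v ^ 2 * lambdaMax A := by
        gcongr
        exact le_csSup (bddAbove_rayleigh A) ⟨x, hx, rfl⟩
    _ = lambdaMax A * (v ⬝ᵥ v) := by rw [dotProduct_self_eq_enorm'_sq, mul_comm]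

lemma enorm'_mulVec_le (M : Matrix (Fin d) (Fin d) ℝ) (v : Fin d → ℝ) :
    enorm' (M *ᵥ v) ≤ specNorm M * enorm' v := by
  have hMv : (M *ᵥ v) ⬝ᵥ (M *ᵥ v) = v ⬝ᵥ ((Mᵀ * M) *ᵥ v) := by
    rw [← mulVec_mulVec, dotProduct_mulVec v Mᵀ, vecMul_transpose]
  rw [enorm', enorm', specNorm, ← Real.sqrt_mul' _ (dotProduct_self_nonneg v), hMv]
  exact Real.sqrt_le_sqrt (dotProduct_mulVec_le_lambdaMax_mul _ v)

lemma abs_integral_dotProduct_mulVec_integral_le {Ω : Type*} [MeasurableSpace Ω]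
    {μ : Measure Ω} [IsProbabilityMeasure μ] (M : Matrix (Fin d) (Fin d) ℝ) {L : ℝ}
    (hL : 0 ≤ L) {D G : Ω → Fin d → ℝ} (hD : Integrable (fun ω => D ω ⬝ᵥ D ω) μ)
    (hG : ∀ ω, enorm' (G ω) ≤ L * (enorm' (D ω) + enorm' (∫ ω', D ω' ∂μ))) :
    |∫ ω, (M *ᵥ ∫ ω', D ω' ∂μ) ⬝ᵥ G ω ∂μ| ≤ 2 * L * specNorm M * ∫ ω, D ω ⬝ᵥ D ω ∂μ := by
  set m := ∫ ω, D ω ∂μ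
  set E := ∫ ω, enorm' (D ω) ∂μ
  have hmeas : AEStronglyMeasurable (fun ω => enorm' (D ω)) μ :=
    Real.continuous_sqrt.comp_aestronglyMeasurable hD.aestronglyMeasurable
  have hD2 : MemLp (fun ω => enorm' (D ω)) 2 μ := by
    refine (memLp_two_iff_integrable_sq hmeas).2 ?_
    simpa only [dotProduct_self_eq_enorm'_sq] using hD
  have hD1 : Integrable (fun ω => enorm' (D ω)) μ := hD2.integrable one_le_two
  have hS : 0 ≤ specNorm M := Real.sqrt_nonneg _
  have hmE : enorm' m ≤ E := enorm'_integral_le μ D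
  have hE2 : E ^ 2 ≤ ∫ ω, D ω ⬝ᵥ D ω ∂μ := by
    simpa only [dotProduct_self_eq_enorm'_sq] using sq_integral_le_integral_sq hD2
  calc |∫ ω, (M *ᵥ m) ⬝ᵥ G ω ∂μ|
      ≤ ∫ ω, enorm' (M *ᵥ m) * (L * (enorm' (D ω) + enorm' m)) ∂μ := by
        rw [← Real.norm_eq_abs]
        refine norm_integral_le_of_norm_le
          ((hD1.add (integrable_const _)).const_mul _ |>.const_mul _) (ae_of_all _ fun ω => ?_)
        exact (abs_dotProduct_le _ _).trans (mul_le_mul_of_nonneg_left (hG ω) (enorm'_nonneg _))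
    _ = enorm' (M *ᵥ m) * (L * (E + enorm' m)) := by
        rw [integral_const_mul, integral_const_mul, integral_add hD1 (integrable_const _),
          integral_const, probReal_univ, one_smul]
    _ ≤ (specNorm M * E) * (L * (E + E)) := by
        have := enorm'_nonneg m
        have hE : 0 ≤ E := integral_nonneg fun ω => enorm'_nonneg _
        gcongr
        exact (enorm'_mulVec_le M m).trans (by gcongr)
    _ = 2 * L * specNorm M * E ^ 2 := by ring
    _ ≤ 2 * L * specNorm M * ∫ ω, D ω ⬝ᵥ D ω ∂μ := by gcongr
end

theorem mean_field_perturbed_monotonicity_general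
    {H : ℕ} {Ω : Type} [MeasurableSpace Ω] (μ : Measure Ω) [IsProbabilityMeasure μ]
    (αX LX : ℝ) (hL : 0 ≤ LX)
    (M : Matrix (Fin H) (Fin H) ℝ)
    (F : (Fin H → ℝ) → (Fin H → ℝ) → (Fin H → ℝ))
    (hmono : ∀ x₁ x₂ : Ω → (Fin H → ℝ),
      Integrable x₁ μ → Integrable x₂ μ →
      Integrable (fun ω => (x₁ ω - x₂ ω) ⬝ᵥ (x₁ ω - x₂ ω)) μ →
      Integrable (fun ω => (x₁ ω - x₂ ω) ⬝ᵥ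
        (F (x₁ ω) (∫ ω', x₁ ω' ∂μ) - F (x₂ ω) (∫ ω', x₂ ω' ∂μ))) μ →
      ∫ ω, (x₁ ω - x₂ ω) ⬝ᵥ
          (F (x₁ ω) (∫ ω', x₁ ω' ∂μ) - F (x₂ ω) (∫ ω', x₂ ω' ∂μ)) ∂μ
        ≤ -αX * ∫ ω, (x₁ ω - x₂ ω) ⬝ᵥ (x₁ ω - x₂ ω) ∂μ)
    (hlip : ∀ x₁ x₂ z₁ z₂ : Fin H → ℝ,
      enorm' (F x₁ z₁ - F x₂ z₂) ≤ LX * (enorm' (x₁ - x₂) + enorm' (z₁ - z₂)))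
    (X₁ X₂ : Ω → (Fin H → ℝ))
    (hX₁ : Integrable X₁ μ) (hX₂ : Integrable X₂ μ)
    (hsq : Integrable (fun ω => (X₁ ω - X₂ ω) ⬝ᵥ (X₁ ω - X₂ ω)) μ)
    (hint1 : Integrable (fun ω => (X₁ ω - X₂ ω) ⬝ᵥ
      (F (X₁ ω) (∫ ω', X₁ ω' ∂μ) - F (X₂ ω) (∫ ω', X₂ ω' ∂μ))) μ)
    (hint2 : Integrable (fun ω =>
      (X₁ ω - X₂ ω - M *ᵥ (∫ ω', (X₁ ω' - X₂ ω') ∂μ)) ⬝ᵥ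
        (F (X₁ ω) (∫ ω', X₁ ω' ∂μ) - F (X₂ ω) (∫ ω', X₂ ω' ∂μ))) μ) :
    ∫ ω, (X₁ ω - X₂ ω - M *ᵥ (∫ ω', (X₁ ω' - X₂ ω') ∂μ)) ⬝ᵥ
        (F (X₁ ω) (∫ ω', X₁ ω' ∂μ) - F (X₂ ω) (∫ ω', X₂ ω' ∂μ)) ∂μ
      ≤ -(αX - 2 * LX * specNorm M) *
          ∫ ω, (X₁ ω - X₂ ω) ⬝ᵥ (X₁ ω - X₂ ω) ∂μ := by
  set G := fun ω => F (X₁ ω) (∫ ω', X₁ ω' ∂μ) - F (X₂ ω) (∫ ω', X₂ ω' ∂μ)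
  set a := M *ᵥ ∫ ω', (X₁ ω' - X₂ ω') ∂μ
  have hcross : |∫ ω, a ⬝ᵥ G ω ∂μ|
      ≤ 2 * LX * specNorm M * ∫ ω, (X₁ ω - X₂ ω) ⬝ᵥ (X₁ ω - X₂ ω) ∂μ := by
    refine abs_integral_dotProduct_mulVec_integral_le M hL hsq fun ω => ?_
    rw [integral_sub hX₁ hX₂]
    exact hlip _ _ _ _
  have hsplit : ∫ ω, (X₁ ω - X₂ ω - a) ⬝ᵥ G ω ∂μ
      = ∫ ω, (X₁ ω - X₂ ω) ⬝ᵥ G ω ∂μ - ∫ ω, a ⬝ᵥ G ω ∂μ := by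
    have haG : Integrable (fun ω => a ⬝ᵥ G ω) μ := (hint1.sub hint2).congr <|
      ae_of_all _ fun ω => by simp only [Pi.sub_apply, sub_dotProduct _ a, sub_sub_cancel, G]
    rw [← integral_sub hint1 haG]
    exact integral_congr_ae (ae_of_all _ fun ω => sub_dotProduct _ _ _)
  have hdiag := hmono X₁ X₂ hX₁ hX₂ hsq hint1
  linarith [neg_abs_le (∫ ω, a ⬝ᵥ G ω ∂μ)]

/-- Perturbed monotonicity under a mean-field matrix `M`: if `F` satisfies the
`α`-monotonicity `E[⟨x¹−x², F(x¹,E x¹) − F(x²,E x²)⟩] ≤ −α E[|x¹−x²|²]` and is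
`L`-Lipschitz, and `α − 2L‖M‖₂ > 0`, then
`E[⟨x¹ − x² − M E[x¹−x²], F(x¹,E x¹) − F(x²,E x²)⟩] ≤ −(α − 2L‖M‖₂) E[|x¹−x²|²]`. -/
theorem mean_field_perturbed_monotonicity
    {H : ℕ} {Ω : Type} [MeasurableSpace Ω] (μ : Measure Ω) [IsProbabilityMeasure μ]
    (αX LX : ℝ) (hα : 0 < αX) (hL : 0 ≤ LX)
    (M : Matrix (Fin H) (Fin H) ℝ)
    (hM : 0 < αX - 2 * LX * specNorm M)
    (F : (Fin H → ℝ) → (Fin H → ℝ) → (Fin H → ℝ))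
    (hmono : ∀ x₁ x₂ : Ω → (Fin H → ℝ),
      Integrable x₁ μ → Integrable x₂ μ →
      Integrable (fun ω => (x₁ ω - x₂ ω) ⬝ᵥ (x₁ ω - x₂ ω)) μ →
      Integrable (fun ω => (x₁ ω - x₂ ω) ⬝ᵥ
        (F (x₁ ω) (∫ ω', x₁ ω' ∂μ) - F (x₂ ω) (∫ ω', x₂ ω' ∂μ))) μ →
      ∫ ω, (x₁ ω - x₂ ω) ⬝ᵥ
          (F (x₁ ω) (∫ ω', x₁ ω' ∂μ) - F (x₂ ω) (∫ ω', x₂ ω' ∂μ)) ∂μ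
        ≤ -αX * ∫ ω, (x₁ ω - x₂ ω) ⬝ᵥ (x₁ ω - x₂ ω) ∂μ)
    (hlip : ∀ x₁ x₂ z₁ z₂ : Fin H → ℝ,
      enorm' (F x₁ z₁ - F x₂ z₂) ≤ LX * (enorm' (x₁ - x₂) + enorm' (z₁ - z₂)))
    (X₁ X₂ : Ω → (Fin H → ℝ))
    (hX₁ : Integrable X₁ μ) (hX₂ : Integrable X₂ μ)
    (hsq : Integrable (fun ω => (X₁ ω - X₂ ω) ⬝ᵥ (X₁ ω - X₂ ω)) μ)
    (hint1 : Integrable (fun ω => (X₁ ω - X₂ ω) ⬝ᵥ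
      (F (X₁ ω) (∫ ω', X₁ ω' ∂μ) - F (X₂ ω) (∫ ω', X₂ ω' ∂μ))) μ)
    (hint2 : Integrable (fun ω =>
      (X₁ ω - X₂ ω - M *ᵥ (∫ ω', (X₁ ω' - X₂ ω') ∂μ)) ⬝ᵥ
        (F (X₁ ω) (∫ ω', X₁ ω' ∂μ) - F (X₂ ω) (∫ ω', X₂ ω' ∂μ))) μ) :
    ∫ ω, (X₁ ω - X₂ ω - M *ᵥ (∫ ω', (X₁ ω' - X₂ ω') ∂μ)) ⬝ᵥ
        (F (X₁ ω) (∫ ω', X₁ ω' ∂μ) - F (X₂ ω) (∫ ω', X₂ ω' ∂μ)) ∂μ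
      ≤ -(αX - 2 * LX * specNorm M) *
          ∫ ω, (X₁ ω - X₂ ω) ⬝ᵥ (X₁ ω - X₂ ω) ∂μ :=
  mean_field_perturbed_monotonicity_general μ αX LX hL M F hmono hlip X₁ X₂ hX₁ hX₂ hsq hint1 hint2
end
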